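/- Under the hypotheses of the previous statement (b > √(2ω_max/d_min)), the univariate function ψ_n(x) := Σ_{l=1}^L ω⁽ˡ⁾_n · MC_{b²/ω⁽ˡ⁾_n}(x − a⁽ˡ⁾) has 𝔄 = {a⁽¹⁾,…,a⁽ᴸ⁾} as the set of all its isolated local minimizers; in particular, the open neighborhoods N_l := {x : |x − a⁽ˡ⁾| < ω⁽ˡ⁾_n/b²} are pairwise disjoint, ψ_n is constant on the complement of their union, and on each N_l the function x ↦ MC_{b²/ω⁽ˡ⁾_n}(x − a⁽ˡ⁾) has a⁽ˡ⁾ as its unique local minimizer. -/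

import Mathlib

/-!
Each term `MC_γ(· - a)` rises strictly from `0` at `a` to its ceiling `1/(2γ)` at distance `1/γ`
and stays there. Since `b² > 2 ω_max / d_min`, the radii `ω_l / b²` sum to less than any gap
`|a_l - a_l'|`, so near `a_l` every other term sits at its ceiling and `ψ` is a positive multiple
of the `l`-th term plus a constant: its only local minimizer there is `a_l`. Off the union of
these neighbourhoods `ψ` attains its global maximum, so a local minimizer there is also a local
maximum; `ψ` is then locally constant around it, and the minimizer cannot be isolated.
-/

open Filter Topology

/-- The minimax concave penalty with parameter `γ`. -/
noncomputable def MC (γ : ℝ) (t : ℝ) : ℝ :=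
  if |t| ≤ 1 / γ then |t| - γ / 2 * t ^ 2 else 1 / (2 * γ)

/-- `a` is an isolated local minimizer of the real-valued function `f`. -/
def IsIsolatedLocalMin {α : Type*} [TopologicalSpace α] (f : α → ℝ) (a : α) : Prop :=
  IsLocalMin f a ∧ ∃ U ∈ nhds a, ∀ y ∈ U, IsLocalMin f y → y = a

section MC

variable {γ : ℝ}

lemma MC_abs (t : ℝ) : MC γ |t| = MC γ t := by
  simp only [MC, abs_abs, sq_abs]

lemma MC_zero (hγ : 0 < γ) : MC γ 0 = 0 := by
  simp [MC, hγ.le]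

lemma MC_nonneg (hγ : 0 < γ) (t : ℝ) : 0 ≤ MC γ t := by
  unfold MC
  split_ifs with h
  · have : γ * |t| ≤ 1 := (le_div_iff₀' hγ).mp h
    nlinarith [sq_abs t, abs_nonneg t]
  · positivity

lemma MC_le (hγ : 0 < γ) (t : ℝ) : MC γ t ≤ 1 / (2 * γ) := by
  unfold MC
  split_ifs
  · rw [le_div_iff₀ (by positivity), ← sq_abs t]
    nlinarith [sq_nonneg (γ * |t| - 1)]
  · rfl

lemma MC_of_inv_le_abs (hγ : 0 < γ) {t : ℝ} (h : 1 / γ ≤ |t|) : MC γ t = 1 / (2 * γ) := by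
  unfold MC
  split_ifs with h'
  · have habs : |t| = 1 / γ := le_antisymm h' h
    rw [← sq_abs, habs]
    field_simp
    ring
  · rfl

lemma strictMonoOn_MC (hγ : 0 < γ) : StrictMonoOn (MC γ) (Set.Icc 0 (1 / γ)) := by
  rintro s ⟨hs, -⟩ t ⟨ht, htγ⟩ hst
  have : γ * t ≤ 1 := (le_div_iff₀' hγ).mp htγ
  simp only [MC, abs_of_nonneg hs, abs_of_nonneg ht, if_pos htγ, if_pos (hst.le.trans htγ)]
  nlinarith [mul_pos (sub_pos.mpr hst) (show 0 < 2 - γ * (t + s) by nlinarith)]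

lemma isLocalMin_MC_sub (hγ : 0 < γ) (a : ℝ) : IsLocalMin (fun x => MC γ (x - a)) a :=
  Eventually.of_forall fun x => by simpa [MC_zero hγ] using MC_nonneg hγ (x - a)

end MC

lemma not_isLocalMin_of_lineMap_lt {E : Type*} [AddCommGroup E] [Module ℝ E]
    [TopologicalSpace E] [IsTopologicalAddGroup E] [ContinuousSMul ℝ E] {f : E → ℝ} {x y : E}
    (h : ∀ s ∈ Set.Ioo (0 : ℝ) 1, f (AffineMap.lineMap y x s) < f x) : ¬IsLocalMin f x := by
  intro hmin
  have htends : Tendsto (AffineMap.lineMap y x) (𝓝[<] (1 : ℝ)) (𝓝 x) := by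
    simpa using ((AffineMap.lineMap_continuous (R := ℝ) (p := y) (q := x)).tendsto 1).mono_left
      nhdsWithin_le_nhds
  obtain ⟨s, hle, hs⟩ :=
    ((htends.eventually hmin).and (Ioo_mem_nhdsLT (zero_lt_one' ℝ))).exists
  exact (h s hs).not_ge hle

lemma eq_of_isLocalMin_MC_sub {γ a x : ℝ} (hγ : 0 < γ) (hx : |x - a| < 1 / γ)
    (hmin : IsLocalMin (fun y => MC γ (y - a)) x) : x = a := by
  by_contra hne
  refine not_isLocalMin_of_lineMap_lt (y := a) (fun s ⟨hs0, hs1⟩ => ?_) hmin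
  have hpos : 0 < |x - a| := abs_pos.mpr (sub_ne_zero.mpr hne)
  rw [AffineMap.lineMap_apply, vsub_eq_sub, vadd_eq_add, add_sub_cancel_right, smul_eq_mul,
    ← MC_abs, abs_mul, abs_of_pos hs0, ← MC_abs (x - a)]
  exact strictMonoOn_MC hγ ⟨by positivity, by nlinarith⟩ ⟨hpos.le, hx.le⟩ (by nlinarith)

lemma isLocalMin_const_mul_add_iff {α : Type*} [TopologicalSpace α] {g : α → ℝ} {x : α}
    {c : ℝ} (hc : 0 < c) (d : ℝ) : IsLocalMin (fun y => c * g y + d) x ↔ IsLocalMin g x := by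
  simp only [IsLocalMin, IsMinFilter, add_le_add_iff_right, mul_le_mul_iff_right₀ hc]

lemma IsLocalMax.not_isIsolatedLocalMin {α : Type*} [TopologicalSpace α] {f : α → ℝ} {x : α}
    [(𝓝[≠] x).NeBot] (hmax : IsLocalMax f x) : ¬IsIsolatedLocalMin f x := by
  rintro ⟨hmin, U, hU, hUx⟩
  have hflat : ∀ᶠ y in 𝓝 x, ∀ᶠ z in 𝓝 y, f z = f x :=
    (hmin.and hmax).mono (fun z hz => le_antisymm hz.2 hz.1) |>.eventually_nhds
  obtain ⟨y, hyx, hyU, hy⟩ :=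
    (inter_mem_nhdsWithin {x}ᶜ (inter_mem hU hflat) |> Filter.nonempty_of_mem)
  refine hyx (hUx y hyU ?_)
  filter_upwards [hy] with z hz
  rw [hz, hy.self_of_nhds]

lemma inv_le_abs_sub_of_abs_sub_lt {ι : Type*} {γ a : ι → ℝ}
    (hsep : ∀ l l', l ≠ l' → 1 / γ l + 1 / γ l' ≤ |a l - a l'|) {l l' : ι} (hll' : l ≠ l')
    {x : ℝ} (hx : |x - a l| < 1 / γ l) : 1 / γ l' ≤ |x - a l'| := by
  have := abs_sub_le (a l) x (a l')
  rw [abs_sub_comm (a l) x] at this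
  linarith [hsep l l' hll']

-- The paper's `ψ_n`, with `w = ω`, `γ l = b² / ω l` and centres `a`.
noncomputable def mcpSum {ι : Type*} [Fintype ι] (w γ a : ι → ℝ) (x : ℝ) : ℝ :=
  ∑ l, w l * MC (γ l) (x - a l)

section mcpSum

variable {ι : Type*} [Fintype ι] {w γ a : ι → ℝ}

lemma mcpSum_eq_of_abs_sub_lt (hγ : ∀ l, 0 < γ l)
    (hsep : ∀ l l', l ≠ l' → 1 / γ l + 1 / γ l' ≤ |a l - a l'|) {l : ι} {x : ℝ}
    (hx : |x - a l| < 1 / γ l) :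
    mcpSum w γ a x =
      w l * MC (γ l) (x - a l) + (∑ l', w l' * (1 / (2 * γ l')) - w l * (1 / (2 * γ l))) := by
  have hothers : mcpSum w γ a x - ∑ l', w l' * (1 / (2 * γ l')) =
      w l * MC (γ l) (x - a l) - w l * (1 / (2 * γ l)) := by
    rw [mcpSum, ← Finset.sum_sub_distrib]
    refine Finset.sum_eq_single l (fun l' _ hl' => ?_) (by simp)
    rw [MC_of_inv_le_abs (hγ l') (inv_le_abs_sub_of_abs_sub_lt hsep hl'.symm hx), sub_self]
  linarith

lemma mcpSum_le (hw : ∀ l, 0 ≤ w l) (hγ : ∀ l, 0 < γ l) (x : ℝ) :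
    mcpSum w γ a x ≤ ∑ l, w l * (1 / (2 * γ l)) :=
  Finset.sum_le_sum fun l _ => mul_le_mul_of_nonneg_left (MC_le (hγ l) _) (hw l)

lemma mcpSum_eq_of_notMem (hγ : ∀ l, 0 < γ l) {x : ℝ}
    (hx : x ∉ ⋃ l, {x : ℝ | |x - a l| < 1 / γ l}) :
    mcpSum w γ a x = ∑ l, w l * (1 / (2 * γ l)) := by
  simp only [Set.mem_iUnion, Set.mem_ofPred_eq, not_exists, not_lt] at hx
  exact Finset.sum_congr rfl fun l _ => by rw [MC_of_inv_le_abs (hγ l) (hx l)]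

lemma isLocalMin_mcpSum_iff (hw : ∀ l, 0 < w l) (hγ : ∀ l, 0 < γ l)
    (hsep : ∀ l l', l ≠ l' → 1 / γ l + 1 / γ l' ≤ |a l - a l'|) {l : ι} {x : ℝ}
    (hx : |x - a l| < 1 / γ l) :
    IsLocalMin (mcpSum w γ a) x ↔ IsLocalMin (fun y => MC (γ l) (y - a l)) x := by
  have hnhds : {y : ℝ | |y - a l| < 1 / γ l} ∈ 𝓝 x :=
    (isOpen_lt (by fun_prop) continuous_const).mem_nhds hx
  rw [Filter.EventuallyEq.isLocalMin_iff (Filter.mem_of_superset hnhds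
    fun y hy => mcpSum_eq_of_abs_sub_lt (w := w) hγ hsep hy), isLocalMin_const_mul_add_iff (hw l)]

lemma isIsolatedLocalMin_mcpSum_iff (hw : ∀ l, 0 < w l) (hγ : ∀ l, 0 < γ l)
    (hsep : ∀ l l', l ≠ l' → 1 / γ l + 1 / γ l' ≤ |a l - a l'|) {x : ℝ} :
    IsIsolatedLocalMin (mcpSum w γ a) x ↔ x ∈ Set.range a := by
  constructor
  · intro hiso
    by_cases hx : x ∈ ⋃ l, {x : ℝ | |x - a l| < 1 / γ l}
    · obtain ⟨l, hl⟩ := Set.mem_iUnion.1 hx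
      exact ⟨l, (eq_of_isLocalMin_MC_sub (hγ l) hl
        ((isLocalMin_mcpSum_iff hw hγ hsep hl).1 hiso.1)).symm⟩
    · have hmax : IsLocalMax (mcpSum w γ a) x := Eventually.of_forall fun y => by
        rw [mcpSum_eq_of_notMem hγ hx]
        exact mcpSum_le (fun l => (hw l).le) hγ y
      exact absurd hiso hmax.not_isIsolatedLocalMin
  · rintro ⟨l, rfl⟩
    have hcenter : |a l - a l| < 1 / γ l := by simpa using hγ l
    refine ⟨(isLocalMin_mcpSum_iff hw hγ hsep hcenter).2 (isLocalMin_MC_sub (hγ l) _),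
      {y | |y - a l| < 1 / γ l}, (isOpen_lt (by fun_prop) continuous_const).mem_nhds hcenter,
      fun y hy hmin =>
        eq_of_isLocalMin_MC_sub (hγ l) hy ((isLocalMin_mcpSum_iff hw hγ hsep hy).1 hmin)⟩

end mcpSum

theorem univariate_isolated_minimizers_general {L : ℕ} (a : Fin L → ℝ)
    (dmin : ℝ) (hdmin : IsLeast {d : ℝ | ∃ l l' : Fin L, l ≠ l' ∧ d = |a l - a l'|} dmin)
    (hdpos : 0 < dmin)
    (ω : Fin L → ℝ) (hω : ∀ l, 0 < ω l)
    (ωmax : ℝ) (hωmax : IsGreatest (Set.range ω) ωmax)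
    (b : ℝ) (hb : Real.sqrt (2 * ωmax / dmin) < b) :
    (∀ l l' : Fin L, l ≠ l' →
      Disjoint {x : ℝ | |x - a l| < ω l / b ^ 2} {x : ℝ | |x - a l'| < ω l' / b ^ 2}) ∧
    (∀ x y : ℝ, x ∉ (⋃ l, {x : ℝ | |x - a l| < ω l / b ^ 2}) →
      y ∉ (⋃ l, {x : ℝ | |x - a l| < ω l / b ^ 2}) →
      (∑ l, ω l * MC (b ^ 2 / ω l) (x - a l)) = ∑ l, ω l * MC (b ^ 2 / ω l) (y - a l)) ∧
    (∀ l : Fin L,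
      IsLocalMin (fun x : ℝ => MC (b ^ 2 / ω l) (x - a l)) (a l) ∧
      ∀ x ∈ {x : ℝ | |x - a l| < ω l / b ^ 2},
        IsLocalMin (fun x : ℝ => MC (b ^ 2 / ω l) (x - a l)) x → x = a l) ∧
    {x : ℝ | IsIsolatedLocalMin (fun x : ℝ => ∑ l, ω l * MC (b ^ 2 / ω l) (x - a l)) x} =
      Set.range a := by
  set γ : Fin L → ℝ := fun l => b ^ 2 / ω l
  have hbpos : 0 < b := (Real.sqrt_nonneg _).trans_lt hb
  have hγ : ∀ l, 0 < γ l := fun l => div_pos (by positivity) (hω l)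
  have hradius : ∀ l, 1 / γ l = ω l / b ^ 2 := fun l => one_div_div _ _
  have hsep : ∀ l l', l ≠ l' → 1 / γ l + 1 / γ l' ≤ |a l - a l'| := by
    have hωmax_lt : 2 * ωmax < b ^ 2 * dmin :=
      (div_lt_iff₀ hdpos).1 ((Real.sqrt_lt' hbpos).1 hb)
    intro l l' hll'
    rw [hradius, hradius, ← add_div, div_le_iff₀ (by positivity)]
    nlinarith [hωmax.2 ⟨l, rfl⟩, hωmax.2 ⟨l', rfl⟩, hdmin.2 ⟨l, l', hll', rfl⟩]
  simp only [← hradius]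
  refine ⟨fun l l' hll' => Set.disjoint_left.2 fun x hx hx' =>
      (inv_le_abs_sub_of_abs_sub_lt hsep hll' hx).not_gt hx',
    fun x y hx hy => (mcpSum_eq_of_notMem hγ hx).trans (mcpSum_eq_of_notMem hγ hy).symm,
    fun l => ⟨isLocalMin_MC_sub (hγ l) (a l), fun x hx => eq_of_isLocalMin_MC_sub (hγ l) hx⟩,
    Set.ext fun x => isIsolatedLocalMin_mcpSum_iff hω hγ hsep⟩

/-- For `b > √(2 ω_max/d_min)` the univariate function
`ψ(x) = Σ_l ω⁽ˡ⁾ MC_{b²/ω⁽ˡ⁾}(x − a⁽ˡ⁾)` has the alphabet as its set of isolated local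
minimizers; the neighborhoods `N_l = {x : |x − a⁽ˡ⁾| < ω⁽ˡ⁾/b²}` are pairwise disjoint,
`ψ` is constant outside their union, and on each `N_l` the corresponding MCP term has
`a⁽ˡ⁾` as its unique local minimizer. -/
theorem univariate_isolated_minimizers {L : ℕ} (a : Fin L → ℝ) (ha : Function.Injective a)
    (dmin : ℝ) (hdmin : IsLeast {d : ℝ | ∃ l l' : Fin L, l ≠ l' ∧ d = |a l - a l'|} dmin)
    (hdpos : 0 < dmin)
    (ω : Fin L → ℝ) (hω : ∀ l, 0 < ω l) (hsum : ∑ l, ω l = 1)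
    (ωmax : ℝ) (hωmax : IsGreatest (Set.range ω) ωmax)
    (b : ℝ) (hb : Real.sqrt (2 * ωmax / dmin) < b) :
    (∀ l l' : Fin L, l ≠ l' →
      Disjoint {x : ℝ | |x - a l| < ω l / b ^ 2} {x : ℝ | |x - a l'| < ω l' / b ^ 2}) ∧
    (∀ x y : ℝ, x ∉ (⋃ l, {x : ℝ | |x - a l| < ω l / b ^ 2}) →
      y ∉ (⋃ l, {x : ℝ | |x - a l| < ω l / b ^ 2}) →
      (∑ l, ω l * MC (b ^ 2 / ω l) (x - a l)) = ∑ l, ω l * MC (b ^ 2 / ω l) (y - a l)) ∧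
    (∀ l : Fin L,
      IsLocalMin (fun x : ℝ => MC (b ^ 2 / ω l) (x - a l)) (a l) ∧
      ∀ x ∈ {x : ℝ | |x - a l| < ω l / b ^ 2},
        IsLocalMin (fun x : ℝ => MC (b ^ 2 / ω l) (x - a l)) x → x = a l) ∧
    {x : ℝ | IsIsolatedLocalMin (fun x : ℝ => ∑ l, ω l * MC (b ^ 2 / ω l) (x - a l)) x} =
      Set.range a :=
  univariate_isolated_minimizers_general a dmin hdmin hdpos ω hω ωmax hωmax b hb
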